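/- arXiv:2304.00794 — 2 statements merged into one kernel-verified Lean document; each statement's English description precedes it below -/
import Mathlib

section
/- Let F be as above (smooth on ℂⁿ\{0}, positive, one-homogeneous, S¹-invariant), p ≠ 0 real, u, v ∈ ℂⁿ \ {0} with ∇F(u) · v = 0 (complex inner product), λ ∈ ℂ, and w = v + λu. Then Δ_z|_{z=0} F(u + zw)^p = p² |λ|² F(u)^p + p F(u)^{p-1} Δ_z|_{z=0} F(u + zv), where Δ_z is the Laplacian in the complex variable z ∈ ℂ ≅ ℝ². -/
open MeasureTheory Metric Filter Pointwise
set_option synthInstance.maxHeartbeats 1000000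
set_option maxHeartbeats 1000000
noncomputable section

/-- ℂⁿ with its Euclidean structure (≅ ℝ²ⁿ as a real inner product space). -/
abbrev Cn (n : ℕ) := EuclideanSpace ℂ (Fin n)

instance {n : ℕ} : MeasurableSpace (Cn n) := MeasurableSpace.comap WithLp.ofLp MeasurableSpace.pi
instance {n : ℕ} : BorelSpace (Cn n) := PiLp.borelSpace 2
instance {n : ℕ} : InnerProductSpace ℝ (Cn n) := InnerProductSpace.complexToReal
instance {n : ℕ} (W : Submodule ℂ (Cn n)) : InnerProductSpace ℝ W :=
  InnerProductSpace.complexToReal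

/-- The complex inner product `x · u`, conjugate-linear in `u`
(so that `x · (λ u) = conj λ (x · u)`), whose real part is the real
inner product `⟨x,u⟩` on ℂⁿ ≅ ℝ²ⁿ. -/
def dotC {n : ℕ} (x u : Cn n) : ℂ := inner ℂ u x

/-- Support function of a set `C ⊆ ℂ ≅ ℝ²` at `z`:  `h_C(z) = sup_{c ∈ C} ⟨c, z⟩`. -/
def hsC (C : Set ℂ) (z : ℂ) : ℝ := sSup ((fun c => ((starRingEnd ℂ) c * z).re) '' C)

/-- Radial function of a set. -/
def radial {E : Type*} [SMul ℝ E] (K : Set E) (x : E) : ℝ :=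
  sSup {t : ℝ | 0 ≤ t ∧ t • x ∈ K}

/-- `K` is a star body: compact, star-shaped about the origin, with continuous positive
radial function. -/
def IsStarBody {n : ℕ} (K : Set (Cn n)) : Prop :=
  IsCompact K ∧ (∀ x ∈ K, ∀ t : ℝ, 0 ≤ t → t ≤ 1 → t • x ∈ K) ∧
    (Continuous fun v : sphere (0 : Cn n) 1 => radial K (v : Cn n)) ∧
    (∀ x : Cn n, x ≠ 0 → 0 < radial K x)

/-- Spherical Lebesgue (surface) measure on the unit sphere `S^{2n-1} ⊆ ℂⁿ`. -/
def sphMeas (n : ℕ) : Measure (sphere (0 : Cn n) 1) := (volume : Measure (Cn n)).toSphere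

/-- Arc-length measure on the unit circle `S¹ ⊆ ℂ`. -/
def circMeas : Measure (sphere (0 : ℂ) 1) := (volume : Measure ℂ).toSphere

/-- Dimension of a subset of ℂ (dimension of the direction of its affine span). -/
def dimC (C : Set ℂ) : ℕ := Module.finrank ℝ (affineSpan ℝ C).direction

/-- The Laplacian at z = 0 of a function g : ℂ → ℝ, as the sum of the two second
directional derivatives along 1 and i (i.e. ∂²g/∂(Re z)² + ∂²g/∂(Im z)² at 0). -/
def lapAtZero (g : ℂ → ℝ) : ℝ :=
  iteratedDeriv 2 (fun t : ℝ => g (t : ℂ)) 0 +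
    iteratedDeriv 2 (fun t : ℝ => g ((t : ℂ) * Complex.I)) 0

namespace LapShiftAux
open Topology

/-- decomposition of a complex scalar action into real actions -/
lemma coe_smul' {n : ℕ} (t : ℝ) (y : Cn n) : (t : ℂ) • y = t • y := Complex.coe_smul t y

lemma smul_decomp {n : ℕ} (z : ℂ) (y : Cn n) :
    z • y = z.re • y + z.im • (Complex.I • y) := by
  conv_lhs => rw [← Complex.re_add_im z]
  rw [add_smul, mul_smul, Complex.coe_smul, Complex.coe_smul]

lemma line_contDiff {n : ℕ} (u x : Cn n) : ContDiff ℝ (⊤ : ℕ∞) (fun z : ℂ => u + z • x) := by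
  have h := ((ContinuousLinearMap.toSpanSingleton ℂ x).restrictScalars ℝ).contDiff (n := (⊤ : ℕ∞))
  have he : (fun z : ℂ => u + z • x) =
      fun z : ℂ => u + ((ContinuousLinearMap.toSpanSingleton ℂ x).restrictScalars ℝ) z := by
    funext z; simp [ContinuousLinearMap.toSpanSingleton_apply]
  rw [he]
  exact contDiff_const.add h

lemma line_hasDerivAt {n : ℕ} (u y : Cn n) (t : ℝ) :
    HasDerivAt (fun s : ℝ => u + s • y) y t := by
  simpa using ((hasDerivAt_id t).smul_const y).const_add u

/-- derivative of F along a real line through u -/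
lemma F_line_hasDerivAt {n : ℕ} {F : Cn n → ℝ} {u : Cn n}
    (hF : DifferentiableAt ℝ F u) (y : Cn n) :
    HasDerivAt (fun t : ℝ => F (u + t • y)) (fderiv ℝ F u y) 0 := by
  exact hF.hasFDerivAt.comp_hasDerivAt_of_eq 0 (line_hasDerivAt u y 0) (by simp)

lemma F_contDiffAt {n : ℕ} {F : Cn n → ℝ} (hsm : ContDiffOn ℝ (⊤ : ℕ∞) F {(0 : Cn n)}ᶜ)
    {x : Cn n} (hx : x ≠ 0) : ContDiffAt ℝ (⊤ : ℕ∞) F x :=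
  hsm.contDiffAt (isOpen_compl_singleton.mem_nhds hx)

/-- Euler: D_u F(u) = F(u). -/
lemma euler_self {n : ℕ} {F : Cn n → ℝ} (hsm : ContDiffOn ℝ (⊤ : ℕ∞) F {(0 : Cn n)}ᶜ)
    (hhom : ∀ (z : ℂ) (w : Cn n), F (z • w) = ‖z‖ * F w)
    {u : Cn n} (hu : u ≠ 0) : fderiv ℝ F u u = F u := by
  have hd : DifferentiableAt ℝ F u := (F_contDiffAt hsm hu).differentiableAt (by simp)
  have hev : (fun t : ℝ => F (u + t • u)) =ᶠ[𝓝 0] fun t => (1 + t) * F u := by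
    filter_upwards [eventually_gt_nhds (show (-1 : ℝ) < 0 by norm_num)] with t ht
    have harg : u + t • u = (((1 + t : ℝ) : ℂ)) • u := by
      rw [Complex.coe_smul, add_smul, one_smul]
    rw [harg, hhom]
    rw [Complex.norm_real, Real.norm_eq_abs, abs_of_pos (by linarith : (0:ℝ) < 1 + t)]
  have h2 : HasDerivAt (fun t : ℝ => (1 + t) * F u) (F u) 0 := by
    simpa using (((hasDerivAt_id (0:ℝ)).const_add 1).mul_const (F u))
  have h3 : HasDerivAt (fun t : ℝ => F (u + t • u)) (F u) 0 :=
    h2.congr_of_eventuallyEq hev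
  exact (F_line_hasDerivAt hd u).unique h3

/-- rotation invariance: D_{iu} F(u) = 0. -/
lemma euler_rot {n : ℕ} {F : Cn n → ℝ} (hsm : ContDiffOn ℝ (⊤ : ℕ∞) F {(0 : Cn n)}ᶜ)
    (hhom : ∀ (z : ℂ) (w : Cn n), F (z • w) = ‖z‖ * F w)
    {u : Cn n} (hu : u ≠ 0) : fderiv ℝ F u (Complex.I • u) = 0 := by
  have hd : DifferentiableAt ℝ F u := (F_contDiffAt hsm hu).differentiableAt (by simp)
  have hev : (fun t : ℝ => F (u + t • (Complex.I • u)))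
      = fun t => Real.sqrt (1 + t ^ 2) * F u := by
    funext t
    have harg : u + t • (Complex.I • u) = (1 + (t : ℂ) * Complex.I) • u := by
      rw [add_smul, one_smul, mul_smul, Complex.coe_smul]
    rw [harg, hhom]
    congr 1
    rw [Complex.norm_def, Complex.normSq_apply]
    simp
    ring_nf
  have h2 : HasDerivAt (fun t : ℝ => Real.sqrt (1 + t ^ 2) * F u) 0 0 := by
    have hq : HasDerivAt (fun t : ℝ => 1 + t ^ 2) 0 0 := by
      simpa using ((hasDerivAt_pow 2 (0:ℝ)).const_add 1)
    have hs : HasDerivAt Real.sqrt (1 / (2 * Real.sqrt ((fun t : ℝ => 1 + t ^ 2) 0)))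
        ((fun t : ℝ => 1 + t ^ 2) 0) := Real.hasDerivAt_sqrt (by norm_num)
    have := (hs.comp 0 hq).mul_const (F u)
    simpa using this
  have h3 : HasDerivAt (fun t : ℝ => F (u + t • (Complex.I • u))) 0 0 := by
    rw [hev]; exact h2
  exact (F_line_hasDerivAt hd (Complex.I • u)).unique h3

lemma rpow_dd {n : ℕ} {F : Cn n → ℝ} (hsm : ContDiffOn ℝ (⊤ : ℕ∞) F {(0 : Cn n)}ᶜ)
    (hpos : ∀ x : Cn n, x ≠ 0 → 0 < F x) {u : Cn n} (hu : u ≠ 0) (p : ℝ) (y : Cn n) :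
    deriv (deriv (fun t : ℝ => F (u + t • y) ^ p)) 0
      = p * (p - 1) * F u ^ (p - 2) * (fderiv ℝ F u y) ^ 2
        + p * F u ^ (p - 1) * deriv (deriv (fun t : ℝ => F (u + t • y))) 0 := by
  have hlineC : Continuous (fun t : ℝ => u + t • y) :=
    continuous_const.add (continuous_id.smul continuous_const)
  have hne : ∀ᶠ t in 𝓝 (0 : ℝ), u + t • y ≠ 0 :=
    hlineC.continuousAt.eventually_ne (by simpa using hu)
  obtain ⟨ε, hεpos, hball⟩ := Metric.eventually_nhds_iff_ball.mp hne
  set dφ : ℝ → ℝ := fun t => (fderiv ℝ F (u + t • y)) y with hdφ_def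
  have hφ' : ∀ t ∈ ball (0:ℝ) ε, HasDerivAt (fun s : ℝ => F (u + s • y)) (dφ t) t := by
    intro t ht
    exact (((F_contDiffAt hsm (hball t ht)).differentiableAt
      (by simp)).hasFDerivAt).comp_hasDerivAt t (line_hasDerivAt u y t)
  have hφpos : ∀ t ∈ ball (0:ℝ) ε, 0 < F (u + t • y) := fun t ht => hpos _ (hball t ht)
  have h0mem : (0:ℝ) ∈ ball (0:ℝ) ε := mem_ball_self hεpos
  have hppow : ∀ t ∈ ball (0:ℝ) ε,
      HasDerivAt (fun s : ℝ => F (u + s • y) ^ p)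
        (p * F (u + t • y) ^ (p - 1) * dφ t) t := by
    intro t ht
    exact (Real.hasDerivAt_rpow_const (Or.inl (ne_of_gt (hφpos t ht)))).comp t (hφ' t ht)
  have hderiv1 : deriv (fun s : ℝ => F (u + s • y) ^ p)
      =ᶠ[𝓝 (0:ℝ)] fun t => p * F (u + t • y) ^ (p - 1) * dφ t :=
    eventually_of_mem (ball_mem_nhds _ hεpos) (fun t ht => (hppow t ht).deriv)
  have hderiv2 : deriv (fun s : ℝ => F (u + s • y)) =ᶠ[𝓝 (0:ℝ)] dφ :=
    eventually_of_mem (ball_mem_nhds _ hεpos) (fun t ht => (hφ' t ht).deriv)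
  -- differentiability of dφ at 0
  have hg' : DifferentiableAt ℝ (fderiv ℝ F) (u + (0:ℝ) • y) := by
    simpa using ((F_contDiffAt hsm hu).fderiv_right (m := 1) (WithTop.coe_le_coe.mpr le_top)).differentiableAt one_ne_zero
  have h1 : DifferentiableAt ℝ (fun t : ℝ => fderiv ℝ F (u + t • y)) 0 :=
    hg'.comp 0 (line_hasDerivAt u y 0).differentiableAt
  have hdφdiff : DifferentiableAt ℝ dφ 0 := h1.clm_apply (differentiableAt_const y)
  -- second derivative of φ^p at 0
  have part1 : HasDerivAt (fun t : ℝ => p * F (u + t • y) ^ (p - 1))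
      (p * ((p - 1) * F (u + (0:ℝ) • y) ^ (p - 1 - 1) * dφ 0)) 0 := by
    exact ((Real.hasDerivAt_rpow_const
      (Or.inl (ne_of_gt (hφpos 0 h0mem)))).comp 0 (hφ' 0 h0mem)).const_mul p
  have part2 : HasDerivAt dφ (deriv dφ 0) 0 := hdφdiff.hasDerivAt
  have hψ0 : HasDerivAt (fun t : ℝ => p * F (u + t • y) ^ (p - 1) * dφ t)
      ((p * ((p - 1) * F (u + (0:ℝ) • y) ^ (p - 1 - 1) * dφ 0)) * dφ 0
        + (p * F (u + (0:ℝ) • y) ^ (p - 1)) * deriv dφ 0) 0 := part1.mul part2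
  have key : deriv (deriv (fun t : ℝ => F (u + t • y) ^ p)) 0
      = (p * ((p - 1) * F (u + (0:ℝ) • y) ^ (p - 1 - 1) * dφ 0)) * dφ 0
        + (p * F (u + (0:ℝ) • y) ^ (p - 1)) * deriv dφ 0 := by
    rw [hderiv1.deriv_eq]; exact hψ0.deriv
  rw [key, hderiv2.deriv_eq]
  have h0 : u + (0:ℝ) • y = u := by simp
  have hdφ0 : dφ 0 = fderiv ℝ F u y := by rw [hdφ_def]; simp
  rw [h0, hdφ0, show p - 1 - 1 = p - 2 by ring]
  ring

/-- Main shift lemma for second derivatives along one direction. -/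
lemma key_shift {n : ℕ} {F : Cn n → ℝ} (hsm : ContDiffOn ℝ (⊤ : ℕ∞) F {(0 : Cn n)}ᶜ)
    (hhom : ∀ (z : ℂ) (w : Cn n), F (z • w) = ‖z‖ * F w)
    {u : Cn n} (hu : u ≠ 0) (x : Cn n) (μ : ℂ)
    (hDx : fderiv ℝ F u x = 0) (hDix : fderiv ℝ F u (Complex.I • x) = 0) :
    deriv (deriv (fun t : ℝ => F (u + t • (x + μ • u)))) 0
      = deriv (deriv (fun t : ℝ => F (u + t • x))) 0 + μ.im ^ 2 * F u := by
  set H : ℂ → ℝ := fun z => F (u + z • x) with hH_def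
  -- smoothness of H
  have hHsm : ∀ z : ℂ, u + z • x ≠ 0 → ContDiffAt ℝ 2 H z := by
    intro z hz
    exact ((F_contDiffAt hsm hz).of_le (by rw [← WithTop.coe_ofNat]; exact WithTop.coe_le_coe.mpr le_top)).comp z
      ((line_contDiff u x).contDiffAt.of_le (by rw [← WithTop.coe_ofNat]; exact WithTop.coe_le_coe.mpr le_top))
  -- δ-ball where u + z • x ≠ 0
  have hopen : IsOpen {z : ℂ | u + z • x ≠ 0} := by
    have : {z : ℂ | u + z • x ≠ 0} = (fun z : ℂ => u + z • x) ⁻¹' {(0 : Cn n)}ᶜ := rfl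
    rw [this]
    exact isOpen_compl_singleton.preimage (line_contDiff u x).continuous
  obtain ⟨δ, hδpos, hδ⟩ := Metric.isOpen_iff.mp hopen 0 (by simpa using hu)
  -- first derivative of H at 0 vanishes
  have hFd : DifferentiableAt ℝ F u := (F_contDiffAt hsm hu).differentiableAt (by simp)
  set L : ℂ →L[ℝ] Cn n := (ContinuousLinearMap.toSpanSingleton ℂ x).restrictScalars ℝ with hL_def
  have hlinfd : HasFDerivAt (fun z : ℂ => u + z • x) L 0 := by
    have h := (L.hasFDerivAt (x := (0:ℂ))).const_add u
    apply h.congr_of_eventuallyEq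
    filter_upwards with z
    simp [hL_def, ContinuousLinearMap.toSpanSingleton_apply]
  have hDH0 : fderiv ℝ H 0 = 0 := by
    have hFd' : HasFDerivAt F (fderiv ℝ F u) (u + (0 : ℂ) • x) := by
      simpa using hFd.hasFDerivAt
    have hcomp : HasFDerivAt H ((fderiv ℝ F u).comp L) 0 := hFd'.comp 0 hlinfd
    rw [hcomp.fderiv]
    ext z
    simp only [ContinuousLinearMap.coe_comp', Function.comp_apply,
      ContinuousLinearMap.coe_restrictScalars', hL_def,
      ContinuousLinearMap.toSpanSingleton_apply, ContinuousLinearMap.zero_apply]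
    rw [smul_decomp z x, map_add, ContinuousLinearMap.map_smul,
      ContinuousLinearMap.map_smul, hDx, hDix]
    simp
  -- second derivative data of H at 0
  have hH2 : ContDiffAt ℝ 2 H 0 := hHsm 0 (by simpa using hu)
  have hB : HasFDerivAt (fderiv ℝ H) (fderiv ℝ (fderiv ℝ H) 0) 0 :=
    ((hH2.fderiv_right (m := 1) le_rfl).differentiableAt one_ne_zero).hasFDerivAt
  set B := fderiv ℝ (fderiv ℝ H) 0 with hB_def
  -- auxiliary scalar functions
  set c : ℝ → ℂ := fun t => 1 + (t : ℂ) * μ with hc_def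
  set ζ : ℝ → ℂ := fun t => (t : ℂ) / c t with hζ_def
  set ζd : ℝ → ℂ := fun t => 1 / (c t * c t) with hζd_def
  set q : ℝ → ℝ := fun t => (1 + t * μ.re) ^ 2 + (t * μ.im) ^ 2 with hq_def
  set qd : ℝ → ℝ := fun t => 2 * μ.re + (2 * μ.re ^ 2 + 2 * μ.im ^ 2) * t with hqd_def
  set m : ℝ → ℝ := fun t => Real.sqrt (q t) with hm_def
  set md : ℝ → ℝ := fun t => qd t / (2 * Real.sqrt (q t)) with hmd_def
  have hc0 : c 0 = 1 := by simp [hc_def]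
  have hζ0 : ζ 0 = 0 := by simp [hζ_def]
  have hq_normSq : ∀ t, q t = Complex.normSq (c t) := by
    intro t
    simp [hq_def, Complex.normSq_apply, hc_def]
    ring
  have habs : ∀ t, ‖c t‖ = m t := by
    intro t
    rw [Complex.norm_def, ← hq_normSq t]
  have hcD : ∀ t, HasDerivAt c μ t := by
    intro t
    simpa [hc_def] using ((Complex.ofRealCLM.hasDerivAt (x := t)).mul_const μ).const_add 1
  have hcC : Continuous c := by
    rw [hc_def]; exact continuous_const.add (Complex.continuous_ofReal.mul continuous_const)
  have hζcont : ContinuousAt ζ 0 := by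
    rw [hζ_def]
    exact Complex.continuous_ofReal.continuousAt.div hcC.continuousAt (by rw [hc0]; norm_num)
  -- ε-ball of good parameters
  have hmem : {t : ℝ | c t ≠ 0 ∧ ζ t ∈ ball (0:ℂ) δ} ∈ 𝓝 (0:ℝ) := by
    have h1 : ∀ᶠ t in 𝓝 (0:ℝ), c t ≠ 0 :=
      hcC.continuousAt.eventually_ne (by rw [hc0]; norm_num)
    have h2 : ∀ᶠ t in 𝓝 (0:ℝ), ζ t ∈ ball (0:ℂ) δ := by
      exact hζcont.preimage_mem_nhds (by rw [hζ0]; exact ball_mem_nhds _ hδpos)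
    exact (h1.and h2)
  obtain ⟨ε, hεpos, hε⟩ := Metric.mem_nhds_iff.mp hmem
  have h0mem : (0:ℝ) ∈ ball (0:ℝ) ε := mem_ball_self hεpos
  -- eventual product formula
  have hΦeq : ∀ t ∈ ball (0:ℝ) ε, F (u + t • (x + μ • u)) = m t * H (ζ t) := by
    intro t ht
    obtain ⟨hct, hζt⟩ := hε ht
    have hmul : c t * ζ t = (t : ℂ) := by
      rw [hζ_def]
      exact mul_div_cancel₀ _ hct
    have harg : u + t • (x + μ • u) = c t • (u + ζ t • x) := by
      rw [smul_add (c t), smul_smul, hmul, smul_add,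
        ← coe_smul' t x, ← coe_smul' t (μ • u), smul_smul]
      simp only [hc_def]
      rw [add_smul, one_smul]
      abel
    rw [harg, hhom, habs]
  have hΦev : (fun t : ℝ => F (u + t • (x + μ • u))) =ᶠ[𝓝 (0:ℝ)]
      fun t => m t * H (ζ t) :=
    eventually_of_mem (ball_mem_nhds _ hεpos) hΦeq
  -- derivatives of q, m, md
  have hqD : ∀ t, HasDerivAt q (qd t) t := by
    intro t
    have h1 : HasDerivAt (fun t : ℝ => 1 + t * μ.re) μ.re t := by
      simpa using ((hasDerivAt_id t).mul_const μ.re).const_add 1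
    have h2 : HasDerivAt (fun t : ℝ => t * μ.im) μ.im t := by
      simpa using (hasDerivAt_id t).mul_const μ.im
    have := (h1.pow 2).add (h2.pow 2)
    refine this.congr_deriv ?_
    simp only [hqd_def]
    push_cast
    ring
  have hqpos : ∀ t, c t ≠ 0 → 0 < q t := by
    intro t hct
    rw [hq_normSq]
    exact Complex.normSq_pos.mpr hct
  have hmD : ∀ t, c t ≠ 0 → HasDerivAt m (md t) t := by
    intro t hct
    have := (Real.hasDerivAt_sqrt (ne_of_gt (hqpos t hct))).comp t (hqD t)
    refine this.congr_deriv ?_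
    simp only [hmd_def]
    field_simp
  have hm0 : m 0 = 1 := by simp [hm_def, hq_def]
  have hmd0 : md 0 = μ.re := by
    rw [hmd_def, hqd_def, hq_def]; norm_num
  have hmdD : HasDerivAt md (μ.im ^ 2) 0 := by
    have hnum : HasDerivAt qd (2 * μ.re ^ 2 + 2 * μ.im ^ 2) 0 := by
      simpa [hqd_def] using
        ((hasDerivAt_id (0:ℝ)).const_mul (2 * μ.re ^ 2 + 2 * μ.im ^ 2)).const_add (2 * μ.re)
    have hden : HasDerivAt (fun t : ℝ => 2 * Real.sqrt (q t))
        (2 * md 0) 0 := (hmD 0 (by rw [hc0]; norm_num)).const_mul 2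
    have hden0 : 2 * Real.sqrt (q 0) ≠ 0 := by
      rw [hq_def]; norm_num
    have := hnum.div hden hden0
    refine this.congr_deriv ?_
    rw [hmd0]
    simp only [hqd_def, hq_def]
    norm_num
    ring
  -- derivative of ζ and ζd
  have hζD : ∀ t, c t ≠ 0 → HasDerivAt ζ (ζd t) t := by
    intro t hct
    have h1 : HasDerivAt (fun s : ℝ => (s : ℂ)) 1 t := by
      exact Complex.ofRealCLM.hasDerivAt (x := t)
    have := h1.div (hcD t) hct
    refine this.congr_deriv ?_
    rw [hζd_def]
    field_simp [hc_def]
    ring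
  have hζd0 : ζd 0 = 1 := by simp [hζd_def, hc0]
  have hζdD : HasDerivAt ζd (-2 * μ) 0 := by
    have h1 : HasDerivAt (fun t : ℝ => c t * c t) (μ * c 0 + c 0 * μ) 0 :=
      (hcD 0).mul (hcD 0)
    have := (hasDerivAt_const (0:ℝ) (1:ℂ)).div h1 (by rw [hc0]; norm_num)
    refine this.congr_deriv ?_
    rw [hc0]
    ring
  -- derivative of H ∘ ζ on the good ball
  have hζball : ∀ t ∈ ball (0:ℝ) ε,
      HasDerivAt (fun s : ℝ => H (ζ s)) ((fderiv ℝ H (ζ t)) (ζd t)) t := by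
    intro t ht
    obtain ⟨hct, hζt⟩ := hε ht
    have hHd : DifferentiableAt ℝ H (ζ t) :=
      (hHsm (ζ t) (hδ hζt)).differentiableAt two_ne_zero
    exact hHd.hasFDerivAt.comp_hasDerivAt t (hζD t hct)
  -- first derivative formula for Φ
  have hΨ : ∀ t ∈ ball (0:ℝ) ε,
      HasDerivAt (fun s : ℝ => F (u + s • (x + μ • u)))
        (md t * H (ζ t) + m t * ((fderiv ℝ H (ζ t)) (ζd t))) t := by
    intro t ht
    have hct := (hε ht).1
    have h1 := (hmD t hct).mul (hζball t ht)
    exact h1.congr_of_eventuallyEq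
      (eventually_of_mem (isOpen_ball.mem_nhds ht) hΦeq)
  have hdΦ : deriv (fun t : ℝ => F (u + t • (x + μ • u))) =ᶠ[𝓝 (0:ℝ)]
      fun t => md t * H (ζ t) + m t * ((fderiv ℝ H (ζ t)) (ζd t)) :=
    eventually_of_mem (ball_mem_nhds _ hεpos) (fun t ht => (hΨ t ht).deriv)
  -- second derivative of Φ at 0
  have hT1 : HasDerivAt (fun t : ℝ => md t * H (ζ t))
      (μ.im ^ 2 * H (ζ 0) + md 0 * ((fderiv ℝ H (ζ 0)) (ζd 0))) 0 :=
    hmdD.mul (hζball 0 h0mem)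
  have hc2 : HasDerivAt (fun t : ℝ => fderiv ℝ H (ζ t)) (B (ζd 0)) 0 := by
    have := hB.comp_hasDerivAt_of_eq 0 (hζD 0 (by rw [hc0]; norm_num)) hζ0.symm
    exact this
  have happ : HasDerivAt (fun t : ℝ => (fderiv ℝ H (ζ t)) (ζd t))
      ((B (ζd 0)) (ζd 0) + (fderiv ℝ H (ζ 0)) (-2 * μ)) 0 := hc2.clm_apply hζdD
  have hT2 : HasDerivAt (fun t : ℝ => m t * ((fderiv ℝ H (ζ t)) (ζd t)))
      (md 0 * ((fderiv ℝ H (ζ 0)) (ζd 0))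
        + m 0 * ((B (ζd 0)) (ζd 0) + (fderiv ℝ H (ζ 0)) (-2 * μ))) 0 :=
    (hmD 0 (by rw [hc0]; norm_num)).mul happ
  have hΦ'' : deriv (deriv (fun t : ℝ => F (u + t • (x + μ • u)))) 0
      = μ.im ^ 2 * F u + (B 1) 1 := by
    rw [hdΦ.deriv_eq]
    have := (hT1.add hT2).deriv
    refine this.trans ?_
    rw [hζ0, hDH0, hζd0, hm0, hmd0]
    have hH0 : H 0 = F u := by rw [hH_def]; simp
    simp [hH0]
  -- second derivative of f_x at 0
  have hofReal : ∀ t : ℝ, HasDerivAt (fun s : ℝ => (s : ℂ)) 1 t := by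
    intro t
    exact Complex.ofRealCLM.hasDerivAt (x := t)
  have hfx' : ∀ t ∈ ball (0:ℝ) δ,
      HasDerivAt (fun s : ℝ => F (u + s • x)) ((fderiv ℝ H ((t : ℂ))) 1) t := by
    intro t ht
    have htC : ((t : ℂ)) ∈ ball (0:ℂ) δ := by
      simp only [mem_ball, dist_zero_right] at ht ⊢
      simpa using ht
    have hHd : DifferentiableAt ℝ H ((t : ℂ)) :=
      (hHsm _ (hδ htC)).differentiableAt two_ne_zero
    have h2 := hHd.hasFDerivAt.comp_hasDerivAt t (hofReal t)
    apply h2.congr_of_eventuallyEq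
    filter_upwards with s
    rw [hH_def]
    simp [Complex.coe_smul]
  have hdfx : deriv (fun t : ℝ => F (u + t • x)) =ᶠ[𝓝 (0:ℝ)]
      fun t => (fderiv ℝ H ((t : ℂ))) 1 :=
    eventually_of_mem (ball_mem_nhds _ hδpos) (fun t ht => (hfx' t ht).deriv)
  have hc3 : HasDerivAt (fun t : ℝ => fderiv ℝ H ((t : ℂ))) (B 1) 0 := by
    have := hB.comp_hasDerivAt_of_eq 0 (hofReal 0) (by simp)
    exact this
  have happ2 : HasDerivAt (fun t : ℝ => (fderiv ℝ H ((t : ℂ))) 1)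
      ((B 1) 1 + (fderiv ℝ H ((0 : ℝ) : ℂ)) 0) 0 := hc3.clm_apply (hasDerivAt_const 0 1)
  have hfx'' : deriv (deriv (fun t : ℝ => F (u + t • x))) 0 = (B 1) 1 := by
    rw [hdfx.deriv_eq]
    rw [happ2.deriv]
    rw [show (((0:ℝ) : ℂ)) = (0 : ℂ) by simp, hDH0]
    simp
  rw [hΦ'', hfx'']
  ring

end LapShiftAux

/-- Δ_z|₀ F(u+zw)^p = p²|λ|² F(u)^p + p F(u)^{p-1} Δ_z|₀ F(u+zv),
where w = v + λu and ∇F(u) · v = 0 (complex inner product). -/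
theorem laplacian_shift_identity (n : ℕ) (F : Cn n → ℝ)
    (hsm : ContDiffOn ℝ (⊤ : ℕ∞) F {(0 : Cn n)}ᶜ)
    (hpos : ∀ x : Cn n, x ≠ 0 → 0 < F x)
    (hhom : ∀ (z : ℂ) (w : Cn n), F (z • w) = ‖z‖ * F w)
    (p : ℝ) (hp : p ≠ 0) (u v : Cn n) (hu : u ≠ 0) (hv : v ≠ 0)
    (horth : dotC (gradient F u) v = 0) (lam : ℂ) :
    lapAtZero (fun z : ℂ => F (u + z • (v + lam • u)) ^ p)
      = p ^ 2 * ‖lam‖ ^ 2 * F u ^ p +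
        p * F u ^ (p - 1) * lapAtZero (fun z : ℂ => F (u + z • v)) := by
  classical
  have hA : 0 < F u := hpos u hu
  have hFdiff : DifferentiableAt ℝ F u :=
    (LapShiftAux.F_contDiffAt hsm hu).differentiableAt (by simp)
  -- orthogonality facts
  have horth' : (inner ℂ v (gradient F u) : ℂ) = 0 := horth
  have hg : (inner ℂ (gradient F u) v : ℂ) = 0 := by
    rw [← inner_conj_symm, horth', map_zero]
  have hgi : (inner ℂ (gradient F u) (Complex.I • v) : ℂ) = 0 := by
    rw [inner_smul_right, hg, mul_zero]
  have hDv : fderiv ℝ F u v = 0 := by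
    have h1 : (inner ℝ (gradient F u) v : ℝ) = fderiv ℝ F u v :=
      InnerProductSpace.toDual_symm_apply
    have h2 : (inner ℝ (gradient F u) v : ℝ) = (inner ℂ (gradient F u) v : ℂ).re := rfl
    rw [← h1, h2, hg]
    simp
  have hDiv : fderiv ℝ F u (Complex.I • v) = 0 := by
    have h1 : (inner ℝ (gradient F u) (Complex.I • v) : ℝ)
        = fderiv ℝ F u (Complex.I • v) := InnerProductSpace.toDual_symm_apply
    have h2 : (inner ℝ (gradient F u) (Complex.I • v) : ℝ)
        = (inner ℂ (gradient F u) (Complex.I • v) : ℂ).re := rfl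
    rw [← h1, h2, hgi]
    simp
  have hDiiv : fderiv ℝ F u (Complex.I • (Complex.I • v)) = 0 := by
    rw [smul_smul, Complex.I_mul_I, neg_one_smul, map_neg, hDv, neg_zero]
  -- Euler identities
  have hDu : fderiv ℝ F u u = F u := LapShiftAux.euler_self hsm hhom hu
  have hDiu : fderiv ℝ F u (Complex.I • u) = 0 := LapShiftAux.euler_rot hsm hhom hu
  have hlamu : ∀ z : ℂ, fderiv ℝ F u (z • u) = z.re * F u := by
    intro z
    rw [LapShiftAux.smul_decomp z u, map_add, ContinuousLinearMap.map_smul,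
      ContinuousLinearMap.map_smul, hDu, hDiu]
    simp
  -- D values on w and I•w
  have hDw : fderiv ℝ F u (v + lam • u) = lam.re * F u := by
    rw [map_add, hDv, hlamu lam, zero_add]
  have hIw : Complex.I • (v + lam • u) = Complex.I • v + (Complex.I * lam) • u := by
    rw [smul_add, smul_smul]
  have hDIw : fderiv ℝ F u (Complex.I • (v + lam • u)) = -lam.im * F u := by
    rw [hIw, map_add, hDiv, hlamu (Complex.I * lam), zero_add]
    simp
  -- unfolding the Laplacian
  have hit2 : ∀ f : ℝ → ℝ, iteratedDeriv 2 f 0 = deriv (deriv f) 0 := by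
    intro f
    rw [show (2 : ℕ) = 1 + 1 from rfl, iteratedDeriv_succ, iteratedDeriv_one]
  have hlapw : lapAtZero (fun z : ℂ => F (u + z • (v + lam • u)) ^ p)
      = deriv (deriv (fun t : ℝ => F (u + t • (v + lam • u)) ^ p)) 0
        + deriv (deriv (fun t : ℝ =>
            F (u + t • (Complex.I • (v + lam • u))) ^ p)) 0 := by
    have e1 : (fun t : ℝ => F (u + ((t : ℝ) : ℂ) • (v + lam • u)) ^ p)
        = fun t : ℝ => F (u + t • (v + lam • u)) ^ p := by
      funext t; rw [LapShiftAux.coe_smul']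
    have e2 : (fun t : ℝ => F (u + (((t : ℝ) : ℂ) * Complex.I) • (v + lam • u)) ^ p)
        = fun t : ℝ => F (u + t • (Complex.I • (v + lam • u))) ^ p := by
      funext t; rw [mul_smul, LapShiftAux.coe_smul']
    simp only [lapAtZero, hit2, e1, e2]
  have hlapv : lapAtZero (fun z : ℂ => F (u + z • v))
      = deriv (deriv (fun t : ℝ => F (u + t • v))) 0
        + deriv (deriv (fun t : ℝ => F (u + t • (Complex.I • v)))) 0 := by
    have e1 : (fun t : ℝ => F (u + ((t : ℝ) : ℂ) • v))
        = fun t : ℝ => F (u + t • v) := by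
      funext t; rw [LapShiftAux.coe_smul']
    have e2 : (fun t : ℝ => F (u + (((t : ℝ) : ℂ) * Complex.I) • v))
        = fun t : ℝ => F (u + t • (Complex.I • v)) := by
      funext t; rw [mul_smul, LapShiftAux.coe_smul']
    simp only [lapAtZero, hit2, e1, e2]
  -- the two power second derivatives
  have hr1 := LapShiftAux.rpow_dd hsm hpos hu p (v + lam • u)
  have hr2 := LapShiftAux.rpow_dd hsm hpos hu p (Complex.I • (v + lam • u))
  -- the two shift identities
  have k1 := LapShiftAux.key_shift hsm hhom hu v lam hDv hDiv
  have k2 := LapShiftAux.key_shift hsm hhom hu (Complex.I • v) (Complex.I * lam)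
    hDiv hDiiv
  have hIlam_im : (Complex.I * lam).im = lam.re := by simp
  rw [hIlam_im] at k2
  rw [← hIw] at k2
  -- put everything together
  rw [hlapw, hlapv, hr1, hr2, hDw, hDIw, k1, k2]
  have habs2 : ‖lam‖ ^ 2 = lam.re ^ 2 + lam.im ^ 2 := by
    rw [Complex.sq_norm, Complex.normSq_apply]
    ring
  rw [habs2]
  have hA1 : F u ^ (p - 2) * F u ^ (2 : ℕ) = F u ^ p := by
    rw [← Real.rpow_natCast (F u) 2, ← Real.rpow_add hA]
    norm_num
  have hA2 : F u ^ (p - 1) * F u = F u ^ p := by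
    calc F u ^ (p - 1) * F u = F u ^ (p - 1) * F u ^ (1 : ℝ) := by
          rw [Real.rpow_one]
      _ = F u ^ (p - 1 + 1) := (Real.rpow_add hA _ _).symm
      _ = F u ^ p := by norm_num
  linear_combination (p * (p - 1) * (lam.re ^ 2 + lam.im ^ 2)) * hA1
    + (p * (lam.re ^ 2 + lam.im ^ 2)) * hA2
end
end

section
/- Let μ be a finite positive Borel measure on S¹, let p be nonzero with -1 ≤ p < 1, and let L be a star body in ℂⁿ. Define a star body M by ρ_M(u)^{-p} = ∫_{S¹} ρ_L(cu)^{-p} dμ(c) for u ∈ S^{2n-1}. Then V_{2n}(M) ≤ μ(S¹)^{-2n/p} V_{2n}(L), that is, (1/2n)∫_{S^{2n-1}} (∫_{S¹} ρ_L(cu)^{-p} dμ(c))^{-2n/p} du ≤ μ(S¹)^{-2n/p} V_{2n}(L). Equality holds if and only if for every u ∈ S^{2n-1} the function c ↦ ρ_L(cu) is constant μ-almost everywhere. -/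
open MeasureTheory Metric Filter Pointwise
set_option synthInstance.maxHeartbeats 1000000
set_option maxHeartbeats 1000000
noncomputable section

section Aux

open Set

lemma finrank_Cn (n : ℕ) : Module.finrank ℝ (Cn n) = 2 * n := by
  rw [(WithLp.linearEquiv 2 ℝ (Fin n → ℂ)).finrank_eq, Module.finrank_pi_fintype]
  simp [Complex.finrank_real_complex, mul_comm]

lemma IsStarBody.smul_mem_iff {n : ℕ} {L : Set (Cn n)} (hL : IsStarBody L) {x : Cn n}
    (hx : x ≠ 0) {r : ℝ} (hr : 0 < r) : r • x ∈ L ↔ r ≤ radial L x := by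
  obtain ⟨hc, hstar, _, hpos⟩ := hL
  set S : Set ℝ := {t : ℝ | 0 ≤ t ∧ t • x ∈ L} with hS
  have hBdd : BddAbove S := by
    obtain ⟨R, hR⟩ := hc.isBounded.subset_closedBall 0
    refine ⟨R / ‖x‖, fun t ht => ?_⟩
    have h1 : ‖t • x‖ ≤ R := by simpa using hR ht.2
    rw [norm_smul, Real.norm_eq_abs, abs_of_nonneg ht.1] at h1
    rw [le_div_iff₀ (norm_pos_iff.2 hx)]
    exact h1
  have hne : S.Nonempty := by
    by_contra h
    have : radial L x = 0 := by
      rw [radial, show {t : ℝ | 0 ≤ t ∧ t • x ∈ L} = (∅ : Set ℝ) from not_nonempty_iff_eq_empty.1 h,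
        Real.sSup_empty]
    exact absurd this (ne_of_gt (hpos x hx))
  have hclosed : IsClosed S := by
    have : S = Ici (0:ℝ) ∩ (fun t : ℝ => t • x) ⁻¹' L := rfl
    rw [this]
    exact isClosed_Ici.inter (hc.isClosed.preimage (by fun_prop))
  have hmem : radial L x ∈ S := hclosed.csSup_mem hne hBdd
  constructor
  · intro h
    exact le_csSup hBdd ⟨hr.le, h⟩
  · intro h
    have hρ : 0 < radial L x := hpos x hx
    have := hstar _ hmem.2 (r / radial L x) (by positivity) (by rw [div_le_one hρ]; exact h)
    rwa [smul_smul, div_mul_cancel₀ _ (ne_of_gt hρ)] at this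

lemma strictConvexOn_rpow_Ioi {q : ℝ} (hq : q < 0 ∨ 1 < q) :
    StrictConvexOn ℝ (Set.Ioi (0:ℝ)) fun x : ℝ => x ^ q := by
  apply strictConvexOn_of_deriv2_pos' (convex_Ioi 0)
  · exact fun x hx =>
      (Real.continuousAt_rpow_const x q (Or.inl (ne_of_gt hx))).continuousWithinAt
  · intro x hx
    rw [mem_Ioi] at hx
    have h2 : deriv^[2] (fun x : ℝ => x ^ q) x = q * ((q-1) * x ^ (q-1-1)) := by
      have hev : (deriv fun x : ℝ => x ^ q) =ᶠ[nhds x] fun y : ℝ => q * y ^ (q - 1) := by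
        filter_upwards [IsOpen.mem_nhds isOpen_Ioi hx] with y hy
        exact Real.deriv_rpow_const y q
      have : deriv^[2] (fun x : ℝ => x ^ q) x = deriv (deriv fun x : ℝ => x ^ q) x := rfl
      rw [this, hev.deriv_eq]
      have hd : HasDerivAt (fun y : ℝ => y ^ (q-1)) ((q-1) * x ^ (q-1-1)) x :=
        Real.hasDerivAt_rpow_const (Or.inl (ne_of_gt hx))
      exact (hd.const_mul q).deriv
    rw [h2]
    have hx2 : (0:ℝ) < x ^ (q-1-1) := Real.rpow_pos_of_pos hx _
    have hqq : 0 < q * (q - 1) := by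
      rcases hq with h | h
      · nlinarith
      · nlinarith
    calc (0:ℝ) < q * (q-1) * x ^ (q-1-1) := by positivity
      _ = q * ((q - 1) * x ^ (q-1-1)) := by ring

end Aux

section Rot
open Set
variable {n : ℕ}

lemma norm_coe_sphere_one {E : Type*} [NormedAddCommGroup E] (c : sphere (0 : E) 1) :
    ‖(c : E)‖ = 1 := mem_sphere_zero_iff_norm.1 c.2

/-- Multiplication by a unit complex scalar as a real-linear isometry equivalence. -/
def unitMul (c : sphere (0:ℂ) 1) : Cn n ≃ₗᵢ[ℝ] Cn n where
  toLinearEquiv := (LinearEquiv.smulOfNeZero ℂ (Cn n) (c:ℂ)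
    (by simp [← norm_pos_iff, norm_coe_sphere_one c])).restrictScalars ℝ
  norm_map' := fun x => by
    show ‖(c:ℂ) • x‖ = ‖x‖
    rw [norm_smul, norm_coe_sphere_one c, one_mul]

@[simp] lemma unitMul_apply (c : sphere (0:ℂ) 1) (x : Cn n) :
    unitMul c x = (c:ℂ) • x := rfl

lemma smul_preimage_linIso (e : Cn n ≃ₗᵢ[ℝ] Cn n) (s : Set ℝ) (A : Set (Cn n)) :
    s • (⇑e ⁻¹' A) = ⇑e ⁻¹' (s • A) := by
  ext x
  simp only [Set.mem_smul, Set.mem_preimage]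
  constructor
  · rintro ⟨t, ht, y, hy, rfl⟩
    exact ⟨t, ht, e y, hy, (e.map_smul t y).symm⟩
  · rintro ⟨t, ht, b, hb, hx⟩
    refine ⟨t, ht, e.symm b, by simp [hb], e.injective ?_⟩
    rw [e.map_smul, e.apply_symm_apply, hx]

/-- The rotation of the sphere `S^{2n-1}` by a unit complex scalar. -/
def sphMul (c : sphere (0:ℂ) 1) (u : sphere (0 : Cn n) 1) : sphere (0 : Cn n) 1 :=
  ⟨(c:ℂ) • (u : Cn n), by
    simp [mem_sphere_zero_iff_norm, norm_smul, norm_coe_sphere_one c,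
      norm_coe_sphere_one u]⟩

lemma continuous_sphMul (c : sphere (0:ℂ) 1) : Continuous (sphMul (n := n) c) :=
  Continuous.subtype_mk (by fun_prop) _

lemma image_val_preimage_sphMul (c : sphere (0:ℂ) 1) (s : Set (sphere (0 : Cn n) 1)) :
    ((↑) '' (sphMul c ⁻¹' s) : Set (Cn n)) = ⇑(unitMul c) ⁻¹' ((↑) '' s) := by
  ext x
  simp only [Set.mem_image, Set.mem_preimage, unitMul_apply]
  constructor
  · rintro ⟨u, hu, rfl⟩
    exact ⟨sphMul c u, hu, rfl⟩
  · rintro ⟨v, hv, hvx⟩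
    have hx : x ∈ sphere (0 : Cn n) 1 := by
      have h1 : ‖(c:ℂ) • x‖ = 1 := by rw [← hvx]; exact norm_coe_sphere_one v
      rw [norm_smul, norm_coe_sphere_one c, one_mul] at h1
      simpa [mem_sphere_zero_iff_norm] using h1
    refine ⟨⟨x, hx⟩, ?_, rfl⟩
    show sphMul c ⟨x, hx⟩ ∈ s
    have : sphMul c ⟨x, hx⟩ = v := Subtype.ext hvx.symm
    rwa [this]

lemma sphMeas_map_sphMul (c : sphere (0:ℂ) 1) :
    Measure.map (sphMul (n := n) c) (sphMeas n) = sphMeas n := by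
  have hvol : ∀ A : Set (Cn n), volume (⇑(unitMul c) ⁻¹' A) = volume A := by
    intro A
    set me := (unitMul (n := n) c).toHomeomorph.toMeasurableEquiv with hme_def
    have hcoe : ⇑me = ⇑(unitMul (n := n) c) := rfl
    have hme : Measure.map (⇑me) volume = volume := by
      rw [hcoe]; exact (unitMul (n := n) c).measurePreserving.map_eq
    calc volume (⇑(unitMul c) ⁻¹' A)
        = volume (⇑me ⁻¹' A) := by rw [hcoe]
      _ = Measure.map (⇑me) volume A := (MeasurableEquiv.map_apply me A).symm
      _ = volume A := by rw [hme]
  ext s hs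
  rw [Measure.map_apply (continuous_sphMul c).measurable hs, sphMeas,
    Measure.toSphere_apply' _ ((continuous_sphMul c).measurable hs),
    Measure.toSphere_apply' _ hs, image_val_preimage_sphMul,
    smul_preimage_linIso, hvol]

lemma integral_sphMul (c : sphere (0:ℂ) 1) {φ : sphere (0 : Cn n) 1 → ℝ}
    (hφ : Continuous φ) :
    ∫ u, φ (sphMul c u) ∂(sphMeas n) = ∫ u, φ u ∂(sphMeas n) := by
  conv_rhs => rw [← sphMeas_map_sphMul (n := n) c]
  rw [integral_map (continuous_sphMul c).measurable.aemeasurable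
    hφ.aestronglyMeasurable]

end Rot

section Vol
open Set
variable {n : ℕ}

lemma volumeIoiPow_singleton (m : ℕ) (x : Ioi (0:ℝ)) :
    Measure.volumeIoiPow m {x} = 0 := by
  rw [Measure.volumeIoiPow, withDensity_apply _ (measurableSet_singleton x)]
  have h0 : (volume.comap (Subtype.val : Ioi (0:ℝ) → ℝ)) {x} = 0 := by
    rw [comap_subtype_coe_apply measurableSet_Ioi, Set.image_singleton]
    exact measure_singleton _
  exact setLIntegral_measure_zero _ _ h0

lemma volumeIoiPow_Iic (m : ℕ) (x : Ioi (0:ℝ)) :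
    Measure.volumeIoiPow m (Iic x) = ENNReal.ofReal (x.1 ^ (m+1) / (m+1)) := by
  rw [← Iio_union_right]
  have h1 : Measure.volumeIoiPow m (Iio x ∪ {x}) = Measure.volumeIoiPow m (Iio x) := by
    refine le_antisymm ?_ (measure_mono Set.subset_union_left)
    calc Measure.volumeIoiPow m (Iio x ∪ {x})
        ≤ Measure.volumeIoiPow m (Iio x) + Measure.volumeIoiPow m {x} :=
          measure_union_le _ _
      _ = Measure.volumeIoiPow m (Iio x) := by rw [volumeIoiPow_singleton, add_zero]
  rw [h1, Measure.volumeIoiPow_apply_Iio]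

lemma volume_starBody (hn : 1 ≤ n) {L : Set (Cn n)} (hL : IsStarBody L) :
    volume L = ∫⁻ u : sphere (0 : Cn n) 1,
      ENNReal.ofReal ((radial L (u:Cn n)) ^ (2*n) / ((2*n : ℕ) : ℝ)) ∂(sphMeas n) := by
  have hLm : MeasurableSet L := hL.1.isClosed.measurableSet
  haveI : Nontrivial (Cn n) := by
    refine ⟨⟨EuclideanSpace.single ⟨0, hn⟩ (1:ℂ), 0, fun h => ?_⟩⟩
    have h2 := congrArg (fun v : Cn n => v ⟨0, hn⟩) h
    simp [EuclideanSpace.single_apply] at h2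
  have h0 : volume L
      = (volume.comap (Subtype.val : ({(0:Cn n)}ᶜ : Set (Cn n)) → Cn n))
        (Subtype.val ⁻¹' L) := by
    rw [comap_subtype_coe_apply (measurableSet_singleton (0:Cn n)).compl,
      Subtype.image_preimage_coe]
    have : ({(0:Cn n)}ᶜ : Set (Cn n)) ∩ L = L \ {0} := by
      ext y; simp [Set.mem_diff, and_comm]
    rw [this, measure_diff_null (measure_singleton 0)]
  set B : Set (sphere (0 : Cn n) 1 × Ioi (0:ℝ)) :=
    {y | (y.2 : ℝ) • (y.1 : Cn n) ∈ L} with hB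
  have hBm : MeasurableSet B := by
    have : Continuous fun y : sphere (0 : Cn n) 1 × Ioi (0:ℝ) =>
        (y.2 : ℝ) • (y.1 : Cn n) := by fun_prop
    exact this.measurable hLm
  have hpre : (homeomorphUnitSphereProd (Cn n)) ⁻¹' B = Subtype.val ⁻¹' L := by
    ext x
    simp only [Set.mem_preimage, hB, Set.mem_setOf_eq,
      homeomorphUnitSphereProd_apply_fst_coe, homeomorphUnitSphereProd_apply_snd_coe]
    rw [smul_inv_smul₀ (norm_ne_zero_iff.2 x.2)]
  have hmp := (Measure.measurePreserving_homeomorphUnitSphereProd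
    (volume : Measure (Cn n)))
  have h1 : volume L = (volume.toSphere.prod
      (Measure.volumeIoiPow (Module.finrank ℝ (Cn n) - 1))) B := by
    rw [h0, ← hpre, hmp.measure_preimage hBm.nullMeasurableSet]
  rw [h1, Measure.prod_apply hBm]
  refine lintegral_congr fun u => ?_
  have hu0 : (u : Cn n) ≠ 0 := ne_of_mem_sphere u.2 one_ne_zero
  have hρ : 0 < radial L (u : Cn n) := hL.2.2.2 _ hu0
  have hfib : (Prod.mk u ⁻¹' B) = Iic (⟨radial L (u:Cn n), hρ⟩ : Ioi (0:ℝ)) := by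
    ext r
    simp only [Set.mem_preimage, hB, Set.mem_setOf_eq, Set.mem_Iic]
    rw [hL.smul_mem_iff hu0 r.2, ← Subtype.coe_le_coe]
  rw [hfib, volumeIoiPow_Iic]
  have hm : Module.finrank ℝ (Cn n) - 1 + 1 = 2 * n := by
    rw [finrank_Cn]; omega
  congr 1
  rw [show ((Module.finrank ℝ (Cn n) - 1 : ℕ) : ℝ) + 1
      = ((Module.finrank ℝ (Cn n) - 1 + 1 : ℕ) : ℝ) from by push_cast; ring, hm]

lemma sphMeas_open_pos (hn : 1 ≤ n) {U : Set (sphere (0:Cn n) 1)} (hU : IsOpen U)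
    {u₀ : sphere (0:Cn n) 1} (hu₀ : u₀ ∈ U) : 0 < sphMeas n U := by
  obtain ⟨O, hO, hOU⟩ := isOpen_induced_iff.1 hU
  set g : Cn n → Cn n := fun x => ‖x‖⁻¹ • x with hg
  have hgc : ContinuousOn g ({(0:Cn n)}ᶜ : Set (Cn n)) := by
    refine ContinuousOn.fun_smul ?_ continuous_id.continuousOn
    exact ContinuousOn.inv₀ continuous_norm.continuousOn
      (fun x hx => norm_ne_zero_iff.2 hx)
  set W : Set (Cn n) := (({(0:Cn n)}ᶜ : Set (Cn n)) ∩ g ⁻¹' O) ∩ ball (0:Cn n) 1 with hW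
  have hWopen : IsOpen W :=
    (hgc.isOpen_inter_preimage isOpen_compl_singleton hO).inter isOpen_ball
  have hgu : ∀ (t : ℝ), 0 < t → ∀ v : Cn n, ‖v‖ = 1 → g (t • v) = v := by
    intro t ht v hv
    rw [hg]
    simp only [norm_smul, hv, mul_one, Real.norm_eq_abs, abs_of_pos ht]
    rw [inv_smul_smul₀ (ne_of_gt ht)]
  have hWeq : Ioo (0:ℝ) 1 • (((↑) '' U) : Set (Cn n)) = W := by
    ext x
    constructor
    · intro hx
      obtain ⟨t, ht, y, hy, rfl⟩ := Set.mem_smul.1 hx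
      obtain ⟨v, hvU, rfl⟩ := hy
      have hv1 : ‖(v : Cn n)‖ = 1 := norm_coe_sphere_one v
      have hv0 : (v : Cn n) ≠ 0 := ne_of_mem_sphere v.2 one_ne_zero
      refine ⟨⟨smul_ne_zero (ne_of_gt ht.1) hv0, ?_⟩, ?_⟩
      · show g _ ∈ O
        rw [hgu t ht.1 _ hv1]
        rw [← hOU] at hvU
        exact hvU
      · rw [mem_ball_zero_iff, norm_smul, hv1, mul_one, Real.norm_eq_abs,
          abs_of_pos ht.1]
        exact ht.2
    · rintro ⟨⟨hx0, hxO⟩, hxb⟩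
      have hx0' : x ≠ 0 := hx0
      have hxn : 0 < ‖x‖ := norm_pos_iff.2 hx0'
      have hgs : ‖g x‖ = 1 := by
        rw [hg]; simp [norm_smul, inv_mul_cancel₀ (ne_of_gt hxn)]
      have hgU : (⟨g x, mem_sphere_zero_iff_norm.2 hgs⟩ : sphere (0:Cn n) 1) ∈ U := by
        rw [← hOU]; exact hxO
      refine Set.mem_smul.2 ⟨‖x‖, ⟨hxn, mem_ball_zero_iff.1 hxb⟩, g x,
        ⟨_, hgU, rfl⟩, ?_⟩
      rw [hg]
      exact smul_inv_smul₀ (ne_of_gt hxn) x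
  have hWx : ((1:ℝ)/2) • (u₀ : Cn n) ∈ W := by
    rw [← hWeq]
    exact Set.mem_smul.2 ⟨1/2, by norm_num, _, ⟨u₀, hu₀, rfl⟩, rfl⟩
  have hWvol : 0 < volume W := hWopen.measure_pos volume ⟨_, hWx⟩
  rw [sphMeas, Measure.toSphere_apply' _ hU.measurableSet, hWeq]
  refine ENNReal.mul_pos ?_ (ne_of_gt hWvol)
  simp only [ne_eq, Nat.cast_eq_zero]
  rw [finrank_Cn]; omega

end Vol

section Helpers

instance sphMeas_finite (n : ℕ) : IsFiniteMeasure (sphMeas n) := by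
  unfold sphMeas; infer_instance

lemma contIntegrable {X : Type*} [TopologicalSpace X] [CompactSpace X] [T2Space X]
    [MeasurableSpace X] [OpensMeasurableSpace X] {ν : Measure X} [IsFiniteMeasure ν]
    {f : X → ℝ} (hf : Continuous f) : Integrable f ν :=
  hf.integrable_of_hasCompactSupport (isClosed_tsupport f).isCompact

end Helpers

/-- Jensen-type inequality
(1/2n)∫_{S^{2n-1}} (∫_{S¹} ρ_L(cu)^{-p} dμ(c))^{-2n/p} du ≤ μ(S¹)^{-2n/p} V_{2n}(L),
with equality iff for every u the function c ↦ ρ_L(cu) is μ-a.e. constant. -/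
theorem jensen_radial_average_volume (n : ℕ) (hn : 1 ≤ n)
    (p : ℝ) (hp0 : p ≠ 0) (hp1 : -1 ≤ p) (hp2 : p < 1)
    (μ : Measure (sphere (0 : ℂ) 1)) [IsFiniteMeasure μ] (hμ : μ ≠ 0)
    (L : Set (Cn n)) (hL : IsStarBody L) :
    ((1 / (2 * (n : ℝ))) *
        ∫ u : sphere (0 : Cn n) 1,
          (∫ c : sphere (0 : ℂ) 1, radial L ((c : ℂ) • (u : Cn n)) ^ (-p) ∂μ)
            ^ (-(2 * (n : ℝ)) / p) ∂(sphMeas n))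
      ≤ (μ (@Set.univ (sphere (0 : ℂ) 1))).toReal ^ (-(2 * (n : ℝ)) / p) * (volume L).toReal ∧
    (((1 / (2 * (n : ℝ))) *
        ∫ u : sphere (0 : Cn n) 1,
          (∫ c : sphere (0 : ℂ) 1, radial L ((c : ℂ) • (u : Cn n)) ^ (-p) ∂μ)
            ^ (-(2 * (n : ℝ)) / p) ∂(sphMeas n))
        = (μ (@Set.univ (sphere (0 : ℂ) 1))).toReal ^ (-(2 * (n : ℝ)) / p) * (volume L).toReal
      ↔ ∀ u : sphere (0 : Cn n) 1, ∃ r : ℝ,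
          ∀ᵐ (c : sphere (0 : ℂ) 1) ∂μ, radial L ((c : ℂ) • (u : Cn n)) = r) := by
  classical
  haveI : NeZero μ := ⟨hμ⟩
  haveI : (ae μ).NeBot := ae_neBot.mpr hμ
  haveI : Nontrivial (Cn n) := by
    refine ⟨⟨EuclideanSpace.single ⟨0, hn⟩ (1:ℂ), 0, fun h => ?_⟩⟩
    have h2 := congrArg (fun v : Cn n => v ⟨0, hn⟩) h
    simp [EuclideanSpace.single_apply] at h2
  have hn0 : (0:ℝ) < (n:ℝ) := by exact_mod_cast hn
  have hn1 : (1:ℝ) ≤ (n:ℝ) := by exact_mod_cast hn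
  set q : ℝ := -(2 * (n : ℝ)) / p with hqdef
  set mR : ℝ := (μ (@Set.univ (sphere (0 : ℂ) 1))).toReal with hmRdef
  have hmR : 0 < mR := ENNReal.toReal_pos (Measure.measure_univ_ne_zero.2 hμ)
    (measure_ne_top μ _)
  have hq : q < 0 ∨ 1 < q := by
    rcases lt_or_gt_of_ne hp0 with hneg | hpos
    · right
      have h1 : q = (2 * (n:ℝ)) / (-p) := by rw [hqdef, neg_div, ← div_neg]
      rw [h1, lt_div_iff₀ (by linarith)]
      nlinarith [hn1]
    · left
      rw [hqdef]
      apply div_neg_of_neg_of_pos (by nlinarith) hpos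
  have hpq : (-p) * q = 2*(n:ℝ) := by
    rw [hqdef]; field_simp
  have hq0 : q ≠ 0 := by rcases hq with h | h <;> [exact h.ne; positivity]
  -- the radial function data
  have hrad : Continuous fun v : sphere (0 : Cn n) 1 => radial L (v : Cn n) := hL.2.2.1
  set F : sphere (0:ℂ) 1 × sphere (0 : Cn n) 1 → ℝ :=
    fun z => radial L ((z.1 : ℂ) • (z.2 : Cn n)) with hF
  have hFc : Continuous F := by
    have h1 : Continuous fun z : sphere (0:ℂ) 1 × sphere (0 : Cn n) 1 =>
        sphMul z.1 z.2 := Continuous.subtype_mk (by fun_prop) _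
    exact hrad.comp h1
  have hFpos : ∀ z, 0 < F z := fun z => hL.2.2.2 _
    (smul_ne_zero (by simp [← norm_pos_iff, norm_coe_sphere_one z.1])
      (ne_of_mem_sphere z.2.2 one_ne_zero))
  -- min and max of F^(-p) and of F^(2n)
  have hprodne : Nonempty (sphere (0:ℂ) 1 × sphere (0 : Cn n) 1) := by
    obtain ⟨x, hx⟩ := exists_ne (0 : Cn n)
    refine ⟨⟨1, by simp⟩, ⟨‖x‖⁻¹ • x, ?_⟩⟩
    simp [mem_sphere_zero_iff_norm, norm_smul, inv_mul_cancel₀ (norm_ne_zero_iff.2 hx)]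
  set G : sphere (0:ℂ) 1 × sphere (0 : Cn n) 1 → ℝ := fun z => F z ^ (-p) with hG
  have hGc : Continuous G := hFc.rpow_const fun z => Or.inl (ne_of_gt (hFpos z))
  have hGpos : ∀ z, 0 < G z := fun z => Real.rpow_pos_of_pos (hFpos z) _
  obtain ⟨z₁, -, hz₁⟩ := isCompact_univ.exists_isMinOn (Set.univ_nonempty)
    hGc.continuousOn
  obtain ⟨z₂, -, hz₂⟩ := isCompact_univ.exists_isMaxOn (Set.univ_nonempty)
    hGc.continuousOn
  set a' : ℝ := G z₁ with ha'
  set b' : ℝ := G z₂ with hb'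
  have ha'pos : 0 < a' := hGpos z₁
  have hab : ∀ z, G z ∈ Set.Icc a' b' :=
    fun z => ⟨hz₁ (Set.mem_univ z), hz₂ (Set.mem_univ z)⟩
  set H : sphere (0:ℂ) 1 × sphere (0 : Cn n) 1 → ℝ := fun z => F z ^ (2*(n:ℝ)) with hH
  have hHc : Continuous H := hFc.rpow_const fun z => Or.inl (ne_of_gt (hFpos z))
  obtain ⟨z₃, -, hz₃⟩ := isCompact_univ.exists_isMaxOn (Set.univ_nonempty)
    hHc.continuousOn
  -- the functions I and J
  set I : sphere (0 : Cn n) 1 → ℝ :=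
    fun u => ∫ c : sphere (0 : ℂ) 1, radial L ((c : ℂ) • (u : Cn n)) ^ (-p) ∂μ with hIdef
  set J : sphere (0 : Cn n) 1 → ℝ :=
    fun u => ∫ c : sphere (0 : ℂ) 1, F (c, u) ^ (2*(n:ℝ)) ∂μ with hJdef
  have hIG : ∀ u, I u = ∫ c, G (c, u) ∂μ := fun u => rfl
  have hsec : ∀ u : sphere (0 : Cn n) 1, Continuous fun c : sphere (0:ℂ) 1 => (c, u) :=
    fun u => Continuous.prodMk continuous_id continuous_const
  have hGint : ∀ u, Integrable (fun c => G (c, u)) μ :=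
    fun u => contIntegrable (hGc.comp (hsec u))
  have hHint : ∀ u, Integrable (fun c => H (c, u)) μ :=
    fun u => contIntegrable (hHc.comp (hsec u))
  have hIpos : ∀ u, 0 < I u := by
    intro u
    have h1 : mR * a' ≤ ∫ c, G (c, u) ∂μ := by
      have := integral_mono (integrable_const a') (hGint u)
        (fun c => (hab (c, u)).1)
      rwa [integral_const, smul_eq_mul] at this
    rw [hIG u]
    calc (0:ℝ) < mR * a' := by positivity
      _ ≤ _ := h1
  -- per-u Jensen inequality with equality characterization
  have heq_of_const : ∀ u : sphere (0 : Cn n) 1,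
      (∃ r : ℝ, ∀ᵐ c ∂μ, F (c, u) = r) → I u ^ q = mR ^ (q-1) * J u := by
    rintro u ⟨r, hr⟩
    have hrpos : 0 < r := by
      obtain ⟨c, hc⟩ := hr.exists
      rw [← hc]; exact hFpos _
    have hptI : (fun c => G (c, u)) =ᵐ[μ] (fun _ => r ^ (-p)) :=
      hr.mono fun c hc => by show F (c, u) ^ (-p) = r ^ (-p); rw [hc]
    have hptJ : (fun c => F (c, u) ^ (2*(n:ℝ))) =ᵐ[μ] (fun _ => r ^ (2*(n:ℝ))) :=
      hr.mono fun c hc => by dsimp only; rw [hc]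
    have hIu : I u = r ^ (-p) * mR := by
      rw [hIG u, integral_congr_ae hptI, integral_const, smul_eq_mul, mul_comm, measureReal_def, ← hmRdef]
    have hJu : J u = r ^ (2*(n:ℝ)) * mR := by
      rw [show J u = ∫ c, F (c, u) ^ (2*(n:ℝ)) ∂μ from rfl,
        integral_congr_ae hptJ, integral_const, smul_eq_mul, mul_comm, measureReal_def, ← hmRdef]
    rw [hIu, hJu, Real.mul_rpow (Real.rpow_nonneg hrpos.le _) hmR.le,
      ← Real.rpow_mul hrpos.le, hpq, Real.rpow_sub hmR, Real.rpow_one]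
    field_simp
  have key : ∀ u : sphere (0 : Cn n) 1,
      I u ^ q ≤ mR ^ (q-1) * J u ∧
      (I u ^ q = mR ^ (q-1) * J u ↔ ∃ r : ℝ, ∀ᵐ c ∂μ, F (c, u) = r) := by
    intro u
    set f : sphere (0:ℂ) 1 → ℝ := fun c => G (c, u) with hfdef
    have hfi : Integrable f μ := hGint u
    have hfs : ∀ c, f c ∈ Set.Icc a' b' := fun c => hab (c, u)
    have hfpos : ∀ c, 0 < f c := fun c => hGpos (c, u)
    have hconv : StrictConvexOn ℝ (Set.Icc a' b') (fun t : ℝ => t ^ q) :=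
      (strictConvexOn_rpow_Ioi hq).subset
        (fun t ht => lt_of_lt_of_le ha'pos ht.1) (convex_Icc _ _)
    have hφc : ContinuousOn (fun t : ℝ => t ^ q) (Set.Icc a' b') := fun t ht =>
      (Real.continuousAt_rpow_const t q
        (Or.inl (ne_of_gt (lt_of_lt_of_le ha'pos ht.1)))).continuousWithinAt
    have hfq : ∀ c, f c ^ q = F (c, u) ^ (2*(n:ℝ)) := fun c => by
      show (F (c, u) ^ (-p)) ^ q = F (c, u) ^ (2*(n:ℝ))
      rw [← Real.rpow_mul (hFpos _).le, hpq]
    have hgi : Integrable (fun c => f c ^ q) μ := by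
      refine Integrable.congr (hHint u) (Filter.Eventually.of_forall fun c => ?_)
      show H (c, u) = f c ^ q
      rw [hfq c]
    have hIuf : I u = ∫ c, f c ∂μ := hIG u
    have hav1 : ⨍ c, f c ∂μ = mR⁻¹ * I u := by
      rw [average_eq, smul_eq_mul, hIuf, measureReal_def, ← hmRdef]
    have hav2 : ⨍ c, f c ^ q ∂μ = mR⁻¹ * J u := by
      rw [average_eq, smul_eq_mul]
      congr 1
      rw [show J u = ∫ c, F (c, u) ^ (2*(n:ℝ)) ∂μ from rfl]
      exact integral_congr_ae (Filter.Eventually.of_forall fun c => hfq c)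
    rcases hconv.ae_eq_const_or_map_average_lt hφc isClosed_Icc
      (Filter.Eventually.of_forall hfs) hfi hgi with hcase | hcase
    · have hconst : ∃ r : ℝ, ∀ᵐ c ∂μ, F (c, u) = r := by
        refine ⟨(⨍ c, f c ∂μ) ^ (-p)⁻¹, hcase.mono fun c hc => ?_⟩
        have h1 : F (c, u) = (f c) ^ (-p)⁻¹ := by
          show F (c, u) = (F (c, u) ^ (-p)) ^ (-p)⁻¹
          rw [← Real.rpow_mul (hFpos _).le, mul_inv_cancel₀ (neg_ne_zero.2 hp0),
            Real.rpow_one]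
        rw [h1, hc]
        rfl
      exact ⟨(heq_of_const u hconst).le,
        ⟨fun _ => hconst, fun _ => heq_of_const u hconst⟩⟩
    · rw [hav1, hav2] at hcase
      have hA : (0:ℝ) < mR ^ q := Real.rpow_pos_of_pos hmR q
      have hlt : I u ^ q < mR ^ (q-1) * J u := by
        have h4 : mR ^ (q-1) = mR ^ q * mR⁻¹ := by
          rw [Real.rpow_sub hmR, Real.rpow_one, div_eq_mul_inv]
        calc I u ^ q = mR ^ q * ((mR⁻¹ * I u) ^ q) := by
              rw [Real.mul_rpow (inv_nonneg.2 hmR.le) (hIpos u).le,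
                Real.inv_rpow hmR.le]
              field_simp
          _ < mR ^ q * (mR⁻¹ * J u) := by exact (mul_lt_mul_iff_right₀ hA).2 hcase
          _ = mR ^ (q-1) * J u := by rw [h4]; ring
      exact ⟨hlt.le, ⟨fun heq => absurd heq hlt.ne,
        fun hconst => absurd (heq_of_const u hconst) hlt.ne⟩⟩
  -- global quantities and continuity
  have hIcont : Continuous I := by
    have h1 : Continuous fun u : sphere (0 : Cn n) 1 => ∫ c, G (c, u) ∂μ := by
      refine continuous_of_dominated
        (fun u => (hGc.comp (hsec u)).aestronglyMeasurable)
        (fun u => Filter.Eventually.of_forall fun c => ?_) (integrable_const b')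
        (Filter.Eventually.of_forall fun c =>
          hGc.comp (Continuous.prodMk continuous_const continuous_id))
      rw [Real.norm_eq_abs, abs_of_pos (hGpos _)]
      exact (hab (c, u)).2
    exact h1
  have hJcont : Continuous J := by
    have h1 : Continuous fun u : sphere (0 : Cn n) 1 => ∫ c, H (c, u) ∂μ := by
      refine continuous_of_dominated
        (fun u => (hHc.comp (hsec u)).aestronglyMeasurable)
        (fun u => Filter.Eventually.of_forall fun c => ?_) (integrable_const (H z₃))
        (Filter.Eventually.of_forall fun c =>
          hHc.comp (Continuous.prodMk continuous_const continuous_id))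
      rw [Real.norm_eq_abs, abs_of_pos (Real.rpow_pos_of_pos (hFpos _) _)]
      exact hz₃ (Set.mem_univ (c, u))
    exact h1
  have hIq_cont : Continuous fun u => I u ^ q :=
    hIcont.rpow_const fun u => Or.inl (ne_of_gt (hIpos u))
  have hIq_int : Integrable (fun u => I u ^ q) (sphMeas n) := contIntegrable hIq_cont
  have hJint : Integrable J (sphMeas n) := contIntegrable hJcont
  -- Fubini and rotation invariance
  have hradpos : ∀ u : sphere (0:Cn n) 1, 0 < radial L (u:Cn n) :=
    fun u => hL.2.2.2 _ (ne_of_mem_sphere u.2 one_ne_zero)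
  set K : ℝ := ∫ u : sphere (0:Cn n) 1, radial L (u:Cn n) ^ (2*(n:ℝ)) ∂(sphMeas n)
    with hKdef
  have hφK : Continuous fun v : sphere (0:Cn n) 1 => radial L (v:Cn n) ^ (2*(n:ℝ)) :=
    hrad.rpow_const fun v => Or.inl (ne_of_gt (hradpos v))
  have hinner : ∀ c : sphere (0:ℂ) 1,
      ∫ u, F (c, u) ^ (2*(n:ℝ)) ∂(sphMeas n) = K :=
    fun c => integral_sphMul (n := n) c hφK
  have hHprod : Integrable (Function.uncurry fun u (c : sphere (0:ℂ) 1) =>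
      F (c, u) ^ (2*(n:ℝ))) ((sphMeas n).prod μ) := by
    refine contIntegrable ?_
    exact hHc.comp (Continuous.prodMk continuous_snd continuous_fst)
  have hJint_eq : ∫ u, J u ∂(sphMeas n) = mR * K := by
    have hsw := integral_integral_swap hHprod
    calc ∫ u, J u ∂(sphMeas n)
        = ∫ c, ∫ u, F (c, u) ^ (2*(n:ℝ)) ∂(sphMeas n) ∂μ := hsw
      _ = ∫ _c : sphere (0:ℂ) 1, K ∂μ :=
          integral_congr_ae (Filter.Eventually.of_forall fun c => hinner c)
      _ = mR * K := by rw [integral_const, smul_eq_mul, measureReal_def, ← hmRdef]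
  -- relating K to the volume of L
  have h2n0 : ((2*n:ℕ):ℝ) ≠ 0 := by positivity
  have hint2 : Integrable
      (fun u : sphere (0:Cn n) 1 => radial L (u:Cn n) ^ (2*n:ℕ) / ((2*n:ℕ):ℝ))
      (sphMeas n) := contIntegrable ((hrad.pow _).div_const _)
  have htoReal : (volume L).toReal
      = ∫ u : sphere (0:Cn n) 1, radial L (u:Cn n) ^ (2*n:ℕ) / ((2*n:ℕ):ℝ)
          ∂(sphMeas n) := by
    rw [volume_starBody hn hL, ← ofReal_integral_eq_lintegral_ofReal hint2
      (Filter.Eventually.of_forall fun u => by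
        have := (hradpos u).le; positivity),
      ENNReal.toReal_ofReal (integral_nonneg fun u => by
        have := (hradpos u).le; positivity)]
  have hK : K = 2*(n:ℝ) * (volume L).toReal := by
    have hpt : ∀ u : sphere (0:Cn n) 1, radial L (u:Cn n) ^ (2*(n:ℝ))
        = 2*(n:ℝ) * (radial L (u:Cn n) ^ (2*n:ℕ) / ((2*n:ℕ):ℝ)) := by
      intro u
      rw [← Real.rpow_natCast (radial L (u:Cn n)) (2*n)]
      have hc : ((2*n:ℕ):ℝ) = 2*(n:ℝ) := by push_cast; ring
      rw [hc]
      field_simp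
    rw [hKdef, integral_congr_ae (Filter.Eventually.of_forall hpt),
      integral_const_mul, ← htoReal]
  -- the main inequality
  have hrhs : ∫ u, mR^(q-1) * J u ∂(sphMeas n)
      = mR ^ q * (2*(n:ℝ) * (volume L).toReal) := by
    rw [integral_const_mul, hJint_eq, hK, Real.rpow_sub hmR, Real.rpow_one]
    field_simp
  have hmono : ∫ u, I u ^ q ∂(sphMeas n) ≤ ∫ u, mR^(q-1) * J u ∂(sphMeas n) :=
    integral_mono hIq_int (hJint.const_mul _) fun u => (key u).1
  have hineq : 1/(2*(n:ℝ)) * ∫ u, I u ^ q ∂(sphMeas n)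
      ≤ mR ^ q * (volume L).toReal := by
    have h5 := mul_le_mul_of_nonneg_left (hmono.trans hrhs.le)
      (by positivity : (0:ℝ) ≤ 1/(2*(n:ℝ)))
    calc 1/(2*(n:ℝ)) * ∫ u, I u ^ q ∂(sphMeas n)
        ≤ 1/(2*(n:ℝ)) * (mR ^ q * (2*(n:ℝ) * (volume L).toReal)) := h5
      _ = mR ^ q * (volume L).toReal := by field_simp
  -- equality analysis
  set D : sphere (0:Cn n) 1 → ℝ := fun u => mR^(q-1) * J u - I u ^ q with hDdef
  have hDnonneg : ∀ u, 0 ≤ D u := fun u => sub_nonneg.2 (key u).1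
  have hDcont : Continuous D := (continuous_const.mul hJcont).sub hIq_cont
  have hDint : Integrable D (sphMeas n) := contIntegrable hDcont
  have hintD : ∫ u, D u ∂(sphMeas n)
      = mR ^ q * (2*(n:ℝ) * (volume L).toReal) - ∫ u, I u ^ q ∂(sphMeas n) := by
    rw [show (∫ u, D u ∂(sphMeas n))
        = ∫ u, (mR^(q-1) * J u - I u ^ q) ∂(sphMeas n) from rfl,
      integral_sub (hJint.const_mul _) hIq_int, hrhs]
  have hDiff_zero : (∫ u, D u ∂(sphMeas n) = 0) ↔ (∀ u, D u = 0) := by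
    constructor
    · intro h0
      have hae : ∀ᵐ u ∂(sphMeas n), D u = 0 :=
        ((integral_eq_zero_iff_of_nonneg (fun u => hDnonneg u) hDint).1 h0).mono
          fun u hu => hu
      intro u
      by_contra hDu
      have hDpos : 0 < D u := lt_of_le_of_ne (hDnonneg u) (Ne.symm hDu)
      have hUopen : IsOpen (D ⁻¹' (Set.Ioi (D u / 2))) := isOpen_Ioi.preimage hDcont
      have huU : u ∈ D ⁻¹' (Set.Ioi (D u / 2)) := by
        simp only [Set.mem_preimage, Set.mem_Ioi]
        exact div_lt_self hDpos one_lt_two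
      have hUpos := sphMeas_open_pos hn hUopen huU
      have hUnull : sphMeas n (D ⁻¹' (Set.Ioi (D u / 2))) = 0 := by
        refine measure_mono_null ?_ (ae_iff.1 hae)
        intro v hv
        simp only [Set.mem_preimage, Set.mem_Ioi] at hv
        simp only [Set.mem_setOf_eq]
        intro h
        rw [h] at hv
        exact absurd hv (not_lt.2 (half_pos hDpos).le)
      exact absurd hUnull (ne_of_gt hUpos)
    · intro hz
      rw [show (∫ u, D u ∂(sphMeas n)) = ∫ _u : sphere (0:Cn n) 1, (0:ℝ) ∂(sphMeas n)
          from integral_congr_ae (Filter.Eventually.of_forall fun u => hz u),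
        integral_zero]
  have hiff : (1/(2*(n:ℝ)) * ∫ u, I u ^ q ∂(sphMeas n) = mR ^ q * (volume L).toReal)
      ↔ (∀ u : sphere (0:Cn n) 1, ∃ r : ℝ, ∀ᵐ c ∂μ, F (c, u) = r) := by
    have h2npos : (0:ℝ) < 2*(n:ℝ) := by linarith
    constructor
    · intro heq
      have h1 : ∫ u, I u ^ q ∂(sphMeas n)
          = mR ^ q * (2*(n:ℝ) * (volume L).toReal) := by
        have h2 : (2*(n:ℝ)) * (1/(2*(n:ℝ)) * ∫ u, I u ^ q ∂(sphMeas n))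
            = (2*(n:ℝ)) * (mR ^ q * (volume L).toReal) := by rw [heq]
        rw [← mul_assoc, mul_one_div, div_self (ne_of_gt h2npos), one_mul] at h2
        rw [h2]; ring
      have h0 : ∫ u, D u ∂(sphMeas n) = 0 := by rw [hintD, h1]; ring
      intro u
      have hDu := hDiff_zero.1 h0 u
      have hEq : I u ^ q = mR^(q-1) * J u := by
        have : mR^(q-1) * J u - I u ^ q = 0 := hDu
        linarith
      exact ((key u).2).1 hEq
    · intro hconst
      have hz : ∀ u, D u = 0 := fun u => by
        have hEq := ((key u).2).2 (hconst u)
        show mR^(q-1) * J u - I u ^ q = 0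
        rw [hEq]; ring
      have h0 := hDiff_zero.2 hz
      rw [hintD] at h0
      have h1 : ∫ u, I u ^ q ∂(sphMeas n)
          = mR ^ q * (2*(n:ℝ) * (volume L).toReal) := by linarith
      rw [h1]
      field_simp
  exact ⟨hineq, hiff⟩
end
end
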